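/- arXiv:2212.12815 — 4 statements merged into one kernel-verified Lean document; each statement's English description precedes it below -/
import Mathlib

section
/- The complete balanced 3-partite 3-graph on n vertices (with parts of sizes differing by at most 1) contains no copy of C5^- = {abc, bcd, cde, dea} and has minimum positive co-degree equal to floor(n/3). -/
open Finset

/-- The link (co-neighborhood) of the pair `{u,v}`: all `w` with `{u,v,w}` an edge. -/
def link {n : ℕ} (E : Finset (Finset (Fin n))) (u v : Fin n) : Finset (Fin n) :=
  Finset.univ.filter (fun w => ({u, v, w} : Finset (Fin n)) ∈ E)

/-- `E` is the edge set of a 3-graph: every edge has exactly 3 vertices. -/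
def isEdgeSet {n : ℕ} (E : Finset (Finset (Fin n))) : Prop := ∀ e ∈ E, e.card = 3

/-- `E` contains a copy of `C5⁻ = {abc, bcd, cde, dea}`. -/
def hasC5minus {n : ℕ} (E : Finset (Finset (Fin n))) : Prop :=
  ∃ a b c d e : Fin n,
    a ≠ b ∧ a ≠ c ∧ a ≠ d ∧ a ≠ e ∧ b ≠ c ∧ b ≠ d ∧ b ≠ e ∧ c ≠ d ∧ c ≠ e ∧ d ≠ e ∧
    ({a, b, c} : Finset (Fin n)) ∈ E ∧ ({b, c, d} : Finset (Fin n)) ∈ E ∧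
    ({c, d, e} : Finset (Fin n)) ∈ E ∧ ({d, e, a} : Finset (Fin n)) ∈ E

/-- `E` contains a copy of `C5 = {abc, bcd, cde, dea, eab}`. -/
def hasC5 {n : ℕ} (E : Finset (Finset (Fin n))) : Prop :=
  ∃ a b c d e : Fin n,
    a ≠ b ∧ a ≠ c ∧ a ≠ d ∧ a ≠ e ∧ b ≠ c ∧ b ≠ d ∧ b ≠ e ∧ c ≠ d ∧ c ≠ e ∧ d ≠ e ∧
    ({a, b, c} : Finset (Fin n)) ∈ E ∧ ({b, c, d} : Finset (Fin n)) ∈ E ∧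
    ({c, d, e} : Finset (Fin n)) ∈ E ∧ ({d, e, a} : Finset (Fin n)) ∈ E ∧
    ({e, a, b} : Finset (Fin n)) ∈ E

/-- `a, b, c, d` form a `K4` in `E`: all four triples among them are edges. -/
def isK4 {n : ℕ} (E : Finset (Finset (Fin n))) (a b c d : Fin n) : Prop :=
  a ≠ b ∧ a ≠ c ∧ a ≠ d ∧ b ≠ c ∧ b ≠ d ∧ c ≠ d ∧
  ({a, b, c} : Finset (Fin n)) ∈ E ∧ ({a, b, d} : Finset (Fin n)) ∈ E ∧
  ({a, c, d} : Finset (Fin n)) ∈ E ∧ ({b, c, d} : Finset (Fin n)) ∈ E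

/-- `E` contains a copy of `K4⁻ = {abc, abd, acd}`. -/
def hasK4minus {n : ℕ} (E : Finset (Finset (Fin n))) : Prop :=
  ∃ a b c d : Fin n, a ≠ b ∧ a ≠ c ∧ a ≠ d ∧ b ≠ c ∧ b ≠ d ∧ c ≠ d ∧
    ({a, b, c} : Finset (Fin n)) ∈ E ∧ ({a, b, d} : Finset (Fin n)) ∈ E ∧
    ({a, c, d} : Finset (Fin n)) ∈ E

/-- `A`-set of a `K4`: intersection of the three pairwise links of `{x, y, z}`
(the set `A_w` for the fourth vertex `w` of the `K4`). -/
def Aset {n : ℕ} (E : Finset (Finset (Fin n))) (x y z : Fin n) : Finset (Fin n) :=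
  link E x y ∩ link E y z ∩ link E z x

/-- `B`-set of a `K4`: `B_w = N(w,x) ∩ N(w,y) ∩ N(w,z)`. -/
def Bset {n : ℕ} (E : Finset (Finset (Fin n))) (w x y z : Fin n) : Finset (Fin n) :=
  link E w x ∩ link E w y ∩ link E w z

def Ed {n : ℕ} (f : Fin n → Fin 3) : Finset (Finset (Fin n)) :=
  (Finset.univ : Finset (Finset (Fin n))).filter
    (fun e => e.card = 3 ∧ ∀ i : Fin 3, (e.filter (fun v => f v = i)).card ≤ 1)

lemma mem_Ed {n : ℕ} (f : Fin n → Fin 3) (u v w : Fin n) :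
    ({u,v,w} : Finset (Fin n)) ∈ Ed f ↔ f u ≠ f v ∧ f u ≠ f w ∧ f v ≠ f w := by
  simp only [Ed, mem_filter, mem_univ, true_and]
  constructor
  · rintro ⟨hc, hr⟩
    have huv : u ≠ v := by
      rintro rfl
      simp only [insert_idem] at hc
      have := Finset.card_insert_le u {w}
      simp only [Finset.card_singleton] at this; omega
    have huw : u ≠ w := by
      rintro rfl
      have : ({u,v,u} : Finset (Fin n)) = {u,v} := by
        ext x; simp; tauto
      rw [this] at hc
      have := Finset.card_insert_le u {v}
      simp only [Finset.card_singleton] at this; omega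
    have hvw : v ≠ w := by
      rintro rfl
      have : ({u,v,v} : Finset (Fin n)) = {u,v} := by
        simp
      rw [this] at hc
      have := Finset.card_insert_le u {v}
      simp only [Finset.card_singleton] at this; omega
    refine ⟨?_, ?_, ?_⟩
    · intro h
      have hsub : ({u,v} : Finset (Fin n)) ⊆ ({u,v,w} : Finset (Fin n)).filter (fun x => f x = f u) := by
        intro x hx; simp at hx; rcases hx with rfl | rfl <;> simp [h.symm]
      have := Finset.card_le_card hsub
      rw [Finset.card_pair huv] at this
      have := hr (f u); omega
    · intro h
      have hsub : ({u,w} : Finset (Fin n)) ⊆ ({u,v,w} : Finset (Fin n)).filter (fun x => f x = f u) := by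
        intro x hx; simp at hx; rcases hx with rfl | rfl <;> simp [h.symm]
      have := Finset.card_le_card hsub
      rw [Finset.card_pair huw] at this
      have := hr (f u); omega
    · intro h
      have hsub : ({v,w} : Finset (Fin n)) ⊆ ({u,v,w} : Finset (Fin n)).filter (fun x => f x = f v) := by
        intro x hx; simp at hx; rcases hx with rfl | rfl <;> simp [h.symm]
      have := Finset.card_le_card hsub
      rw [Finset.card_pair hvw] at this
      have := hr (f v); omega
  · rintro ⟨h1, h2, h3⟩
    have huv : u ≠ v := fun h => h1 (by rw [h])
    have huw : u ≠ w := fun h => h2 (by rw [h])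
    have hvw : v ≠ w := fun h => h3 (by rw [h])
    constructor
    · rw [Finset.card_insert_of_notMem (by simp [huv, huw]),
        Finset.card_insert_of_notMem (by simp [hvw]), Finset.card_singleton]
    · intro i
      rw [Finset.card_le_one]
      intro a ha b hb
      simp only [mem_filter, mem_insert, mem_singleton] at ha hb
      obtain ⟨ha1, ha2⟩ := ha
      obtain ⟨hb1, hb2⟩ := hb
      rcases ha1 with rfl | rfl | rfl <;> rcases hb1 with rfl | rfl | rfl <;>
        first | rfl | (exfalso; rw [← ha2] at hb2; tauto) |
          (exfalso; rw [← hb2] at ha2; tauto)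

lemma third_color : ∀ a b : Fin 3, a ≠ b → ∃ k : Fin 3, k ≠ a ∧ k ≠ b ∧
    ∀ c : Fin 3, c ≠ a → c ≠ b → c = k := by decide

lemma link_Ed {n : ℕ} (f : Fin n → Fin 3) (u v : Fin n) (k : Fin 3)
    (huv : f u ≠ f v) (hk : ∀ c : Fin 3, c ≠ f u → c ≠ f v → c = k) :
    link (Ed f) u v = Finset.univ.filter (fun w => f w = k) := by
  obtain ⟨hk1, hk2⟩ : k ≠ f u ∧ k ≠ f v := by
    obtain ⟨k', h1, h2, -⟩ := third_color _ _ huv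
    have : k' = k := hk k' h1 h2
    subst this
    exact ⟨h1, h2⟩
  ext w
  simp only [link, mem_filter, mem_univ, true_and, mem_Ed]
  constructor
  · rintro ⟨-, h2, h3⟩
    exact hk _ (Ne.symm h2) (Ne.symm h3)
  · intro h
    exact ⟨huv, fun hh => hk1 (h ▸ hh.symm), fun hh => hk2 (h ▸ hh.symm)⟩


lemma fin3_eq : ∀ a b c d : Fin 3, a ≠ b → a ≠ c → b ≠ c → b ≠ d → c ≠ d → d = a := by
  intro a b c d h1 h2 h3 h4 h5
  fin_cases a <;> fin_cases b <;> fin_cases c <;> fin_cases d <;> simp_all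

lemma card_sum3 {n : ℕ} (f : Fin n → Fin 3) :
    (univ.filter (fun v => f v = 0)).card + (univ.filter (fun v => f v = 1)).card +
      (univ.filter (fun v => f v = 2)).card = n := by
  have := Finset.card_eq_sum_card_fiberwise (f := f) (s := (univ : Finset (Fin n)))
    (t := univ) (fun x _ => mem_univ _)
  rw [Fin.sum_univ_three] at this
  simpa using this.symm

lemma case_help {n : ℕ} (f : Fin n → Fin 3) (i j k : Fin 3) (hij : i ≠ j)
    (hk : ∀ c : Fin 3, c ≠ i → c ≠ j → c = k)
    (hi : 1 ≤ (univ.filter (fun v => f v = i)).card)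
    (hj : 1 ≤ (univ.filter (fun v => f v = j)).card)
    (hknum : (univ.filter (fun v => f v = k)).card = n / 3) (h3 : 3 ≤ n) :
    ∃ u v : Fin n, (link (Ed f) u v).Nonempty ∧ (link (Ed f) u v).card = n / 3 := by
  obtain ⟨u, hu⟩ := Finset.card_pos.mp hi
  obtain ⟨v, hv⟩ := Finset.card_pos.mp hj
  simp only [mem_filter] at hu hv
  have huv : f u ≠ f v := by rw [hu.2, hv.2]; exact hij
  have hl := link_Ed f u v k huv (by rw [hu.2, hv.2]; exact hk)
  refine ⟨u, v, ?_, by rw [hl, hknum]⟩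
  rw [hl, ← Finset.card_pos, hknum]
  omega

/-- the complete balanced 3-partite 3-graph on `n ≥ 3` vertices is
`C5⁻`-free and has minimum positive co-degree exactly `⌊n/3⌋`. -/
theorem stmt_0 (n : ℕ) (hn : 3 ≤ n) (f : Fin n → Fin 3)
    (hbal : ∀ i j : Fin 3,
      (Finset.univ.filter (fun v => f v = i)).card ≤
        (Finset.univ.filter (fun v => f v = j)).card + 1) :
    let E := (Finset.univ : Finset (Finset (Fin n))).filter
      (fun e => e.card = 3 ∧ ∀ i : Fin 3, (e.filter (fun v => f v = i)).card ≤ 1)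
    ¬ hasC5minus E ∧
    (∀ u v : Fin n, (link E u v).Nonempty → n / 3 ≤ (link E u v).card) ∧
    (∃ u v : Fin n, (link E u v).Nonempty ∧ (link E u v).card = n / 3) := by
  intro E
  have hE : E = Ed f := rfl
  have h01 := hbal 0 1
  have h02 := hbal 0 2
  have h10 := hbal 1 0
  have h12 := hbal 1 2
  have h20 := hbal 2 0
  have h21 := hbal 2 1
  have hsum := card_sum3 f
  refine ⟨?_, ?_, ?_⟩
  · rintro ⟨a, b, c, d, e, hab, hac, had, hae, hbc, hbd, hbe, hcd, hce, hde,
      h1, h2, h3, h4⟩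
    rw [hE, mem_Ed] at h1 h2 h4
    obtain ⟨hfab, hfac, hfbc⟩ := h1
    obtain ⟨-, hfbd, hfcd⟩ := h2
    obtain ⟨-, hfda, -⟩ := h4
    exact hfda (fin3_eq (f a) (f b) (f c) (f d) hfab hfac hfbc hfbd hfcd)
  · rintro u v ⟨w, hw⟩
    rw [hE] at hw ⊢
    simp only [link, mem_filter, mem_univ, true_and, mem_Ed] at hw
    have huv : f u ≠ f v := hw.1
    obtain ⟨k, -, -, hk⟩ := third_color _ _ huv
    rw [link_Ed f u v k huv hk]
    rcases (by decide : ∀ k : Fin 3, k = 0 ∨ k = 1 ∨ k = 2) k with rfl | rfl | rfl <;> omega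
  · rw [hE]
    have hmin : (univ.filter (fun v => f v = (0 : Fin 3))).card = n / 3 ∨
        (univ.filter (fun v => f v = (1 : Fin 3))).card = n / 3 ∨
        (univ.filter (fun v => f v = (2 : Fin 3))).card = n / 3 := by omega
    rcases hmin with h | h | h
    · exact case_help f 1 2 0 (by decide) (by decide) (by omega) (by omega) h hn
    · exact case_help f 0 2 1 (by decide) (by decide) (by omega) (by omega) h hn
    · exact case_help f 0 1 2 (by decide) (by decide) (by omega) (by omega) h hn
end

section
/- For every n ≥ 6, every non-empty n-vertex 3-graph H with minimum positive co-degree strictly greater than n/3 contains a copy of C5^- = {abc, bcd, cde, dea}. -/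
open Finset

section helpers

variable {n : ℕ} {E : Finset (Finset (Fin n))}

lemma mem_link_iff {u v w : Fin n} :
    w ∈ link E u v ↔ ({u, v, w} : Finset (Fin n)) ∈ E := by
  simp [link]

lemma edge_perm {x y z : Fin n} (h : ({x, y, z} : Finset (Fin n)) ∈ E) (p q r : Fin n)
    (e : ({p, q, r} : Finset (Fin n)) = {x, y, z}) : ({p, q, r} : Finset (Fin n)) ∈ E := by
  rw [e]; exact h

lemma link_comm (u v : Fin n) : link E u v = link E v u := by
  ext w
  rw [mem_link_iff, mem_link_iff,
    show ({u, v, w} : Finset (Fin n)) = {v, u, w} from by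
      ext t; simp only [Finset.mem_insert, Finset.mem_singleton]; tauto]

lemma edge_ne (hE : isEdgeSet E) {u v w : Fin n} (h : ({u, v, w} : Finset (Fin n)) ∈ E) :
    u ≠ v ∧ u ≠ w ∧ v ≠ w := by
  have h3 := hE _ h
  have key : ∀ x y : Fin n, ({u, v, w} : Finset (Fin n)) ⊆ {x, y} → False := by
    intro x y hs
    have h1 := Finset.card_le_card hs
    have h2 : ({x, y} : Finset (Fin n)).card ≤ 2 :=
      le_trans (Finset.card_insert_le _ _) (by simp)
    omega
  refine ⟨?_, ?_, ?_⟩ <;> rintro rfl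
  · exact key u w (by intro t ht; simp only [Finset.mem_insert, Finset.mem_singleton] at ht ⊢; tauto)
  · exact key u v (by intro t ht; simp only [Finset.mem_insert, Finset.mem_singleton] at ht ⊢; tauto)
  · exact key u v (by intro t ht; simp only [Finset.mem_insert, Finset.mem_singleton] at ht ⊢; tauto)

lemma build5 (hE : isEdgeSet E) {a b c d e : Fin n}
    (h1 : ({a, b, c} : Finset (Fin n)) ∈ E) (h2 : ({b, c, d} : Finset (Fin n)) ∈ E)
    (h3 : ({c, d, e} : Finset (Fin n)) ∈ E) (h4 : ({d, e, a} : Finset (Fin n)) ∈ E)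
    (hbe : b ≠ e) : hasC5minus E := by
  obtain ⟨hab, hac, hbc⟩ := edge_ne hE h1
  obtain ⟨_, hbd, hcd⟩ := edge_ne hE h2
  obtain ⟨_, hce, hde⟩ := edge_ne hE h3
  obtain ⟨_, hda, hea⟩ := edge_ne hE h4
  exact ⟨a, b, c, d, e, hab, hac, hda.symm, hea.symm, hbc, hbd, hbe, hcd, hce, hde,
    h1, h2, h3, h4⟩

/-- Two links whose base pairs share the vertex `y`:
a common neighbour `e ∉ {w}` yields a `C5⁻`, given two edges of the `K4⁻`. -/
lemma shared (hE : isEdgeSet E) {x y z w e : Fin n}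
    (H1 : ({z, w, x} : Finset (Fin n)) ∈ E) (H2 : ({w, x, y} : Finset (Fin n)) ∈ E)
    (h3 : e ∈ link E x y) (h4 : e ∈ link E y z) (hwe : w ≠ e) : hasC5minus E := by
  rw [mem_link_iff] at h3 h4
  exact build5 hE H1 H2 h3
    (edge_perm h4 y e z (by ext t; simp only [Finset.mem_insert, Finset.mem_singleton]; tauto))
    hwe

/-- Two links whose base pairs are disjoint: a common neighbour `e` yields a `C5⁻`. -/
lemma opp (hE : isEdgeSet E) {x y z w e : Fin n}
    (H1 : ({y, x, w} : Finset (Fin n)) ∈ E) (H2 : ({x, w, z} : Finset (Fin n)) ∈ E)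
    (h3 : e ∈ link E x y) (h4 : e ∈ link E z w) (hyz : y ≠ z) : hasC5minus E := by
  rw [mem_link_iff] at h3 h4
  exact build5 hE
    (edge_perm h3 e y x (by ext t; simp only [Finset.mem_insert, Finset.mem_singleton]; tauto))
    H1 H2
    (edge_perm h4 w z e (by ext t; simp only [Finset.mem_insert, Finset.mem_singleton]; tauto))
    hyz

end helpers

section key

variable {n : ℕ} {E : Finset (Finset (Fin n))}

lemma Pq {n : ℕ} {p q r x y z : Fin n}
    (h : (p = x ∨ p = y ∨ p = z) ∧ (q = x ∨ q = y ∨ q = z) ∧ (r = x ∨ r = y ∨ r = z) ∧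
       (x = p ∨ x = q ∨ x = r) ∧ (y = p ∨ y = q ∨ y = r) ∧ (z = p ∨ z = q ∨ z = r)) :
    ({p, q, r} : Finset (Fin n)) = {x, y, z} := by
  obtain ⟨h1, h2, h3, h4, h5, h6⟩ := h
  ext t; simp only [Finset.mem_insert, Finset.mem_singleton]
  constructor <;> rintro (rfl | rfl | rfl) <;> tauto

set_option maxHeartbeats 2000000 in
lemma key_lemma (hn : 6 ≤ n) (hE : isEdgeSet E)
    (hdeg : ∀ u v : Fin n, (link E u v).Nonempty → n < 3 * (link E u v).card)
    {a b c d : Fin n}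
    (habc : ({a, b, c} : Finset (Fin n)) ∈ E)
    (habd : ({a, b, d} : Finset (Fin n)) ∈ E)
    (hacd : ({a, c, d} : Finset (Fin n)) ∈ E) : hasC5minus E := by
  obtain ⟨hab, hac, hbc⟩ := edge_ne hE habc
  obtain ⟨_, had, hbd⟩ := edge_ne hE habd
  obtain ⟨_, _, hcd⟩ := edge_ne hE hacd
  have hk1 : n < 3 * (link E a b).card := hdeg a b ⟨c, mem_link_iff.mpr habc⟩
  have hk2 : n < 3 * (link E b c).card :=
    hdeg b c ⟨a, mem_link_iff.mpr (edge_perm habc b c a (Pq (by simp)))⟩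
  have hk3 : n < 3 * (link E c d).card :=
    hdeg c d ⟨a, mem_link_iff.mpr (edge_perm hacd c d a (Pq (by simp)))⟩
  by_contra h5
  by_cases hbcd : ({b, c, d} : Finset (Fin n)) ∈ E
  · -- K4 case
    set S : Finset (Fin n) := {a, b, c, d} with hS
    have haS : a ∈ S := by simp [hS]
    have hbS : b ∈ S := by simp [hS]
    have hcS : c ∈ S := by simp [hS]
    have hdS : d ∈ S := by simp [hS]
    have hScard : S.card = 4 := by
      rw [hS, Finset.card_insert_of_notMem (by simp [hab, hac, had]),
        Finset.card_insert_of_notMem (by simp [hbc, hbd]),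
        Finset.card_insert_of_notMem (by simp [hcd]), Finset.card_singleton]
    have hk4 : n < 3 * (link E a c).card :=
      hdeg a c ⟨b, mem_link_iff.mpr (edge_perm habc a c b (Pq (by simp)))⟩
    have hk5 : n < 3 * (link E b d).card :=
      hdeg b d ⟨a, mem_link_iff.mpr (edge_perm habd b d a (Pq (by simp)))⟩
    have hLS : ∀ u v : Fin n, u ∈ S → v ∈ S → u ≠ v →
        (link E u v).card ≤ (link E u v \ S).card + 2 := by
      intro u v hu hv huv
      have hsub : link E u v ∩ S ⊆ (S.erase u).erase v := by
        intro t ht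
        rw [Finset.mem_inter, mem_link_iff] at ht
        obtain ⟨_, hut, hvt⟩ := edge_ne hE ht.1
        rw [Finset.mem_erase, Finset.mem_erase]
        exact ⟨hvt.symm, hut.symm, ht.2⟩
      have h1 := Finset.card_le_card hsub
      have hc1 : ((S.erase u).erase v).card = 2 := by
        rw [Finset.card_erase_of_mem (Finset.mem_erase.mpr ⟨huv.symm, hv⟩),
          Finset.card_erase_of_mem hu, hScard]
      have h2 := Finset.card_sdiff_add_card_inter (link E u v) S
      omega
    have m1 := hLS a b haS hbS hab
    have m2 := hLS b c hbS hcS hbc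
    have m3 := hLS c d hcS hdS hcd
    have m4 := hLS a c haS hcS hac
    have m5 := hLS b d hbS hdS hbd
    -- pairwise disjointness of the five (link \ S)'s
    have d12 : Disjoint (link E a b \ S) (link E b c \ S) := by
      rw [Finset.disjoint_left]; rintro e he1 he2
      rw [Finset.mem_sdiff] at he1 he2
      have hde : d ≠ e := by rintro rfl; exact he1.2 hdS
      exact h5 (shared hE (edge_perm hacd c d a (Pq (by simp)))
        (edge_perm habd d a b (Pq (by simp))) he1.1 he2.1 hde)
    have d13 : Disjoint (link E a b \ S) (link E c d \ S) := by
      rw [Finset.disjoint_left]; rintro e he1 he2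
      rw [Finset.mem_sdiff] at he1 he2
      exact h5 (opp hE (edge_perm habd b a d (Pq (by simp)))
        (edge_perm hacd a d c (Pq (by simp))) he1.1 he2.1 hbc)
    have d14 : Disjoint (link E a b \ S) (link E a c \ S) := by
      rw [Finset.disjoint_left]; rintro e he1 he2
      rw [Finset.mem_sdiff] at he1 he2
      have hde : d ≠ e := by rintro rfl; exact he1.2 hdS
      have h3 : e ∈ link E b a := by rw [← link_comm]; exact he1.1
      exact h5 (shared hE (edge_perm hbcd c d b (Pq (by simp)))
        (edge_perm habd d b a (Pq (by simp))) h3 he2.1 hde)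
    have d15 : Disjoint (link E a b \ S) (link E b d \ S) := by
      rw [Finset.disjoint_left]; rintro e he1 he2
      rw [Finset.mem_sdiff] at he1 he2
      have hce : c ≠ e := by rintro rfl; exact he1.2 hcS
      exact h5 (shared hE (edge_perm hacd d c a (Pq (by simp)))
        (edge_perm habc c a b (Pq (by simp))) he1.1 he2.1 hce)
    have d23 : Disjoint (link E b c \ S) (link E c d \ S) := by
      rw [Finset.disjoint_left]; rintro e he1 he2
      rw [Finset.mem_sdiff] at he1 he2
      have hae : a ≠ e := by rintro rfl; exact he1.2 haS
      exact h5 (shared hE (edge_perm habd d a b (Pq (by simp))) habc he1.1 he2.1 hae)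
    have d24 : Disjoint (link E b c \ S) (link E a c \ S) := by
      rw [Finset.disjoint_left]; rintro e he1 he2
      rw [Finset.mem_sdiff] at he1 he2
      have hde : d ≠ e := by rintro rfl; exact he1.2 hdS
      have h4 : e ∈ link E c a := by rw [← link_comm]; exact he2.1
      exact h5 (shared hE (edge_perm habd a d b (Pq (by simp)))
        (edge_perm hbcd d b c (Pq (by simp))) he1.1 h4 hde)
    have d25 : Disjoint (link E b c \ S) (link E b d \ S) := by
      rw [Finset.disjoint_left]; rintro e he1 he2
      rw [Finset.mem_sdiff] at he1 he2
      have hae : a ≠ e := by rintro rfl; exact he1.2 haS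
      have h3 : e ∈ link E c b := by rw [← link_comm]; exact he1.1
      exact h5 (shared hE (edge_perm hacd d a c (Pq (by simp)))
        (edge_perm habc a c b (Pq (by simp))) h3 he2.1 hae)
    have d34 : Disjoint (link E c d \ S) (link E a c \ S) := by
      rw [Finset.disjoint_left]; rintro e he1 he2
      rw [Finset.mem_sdiff] at he1 he2
      have hbe : b ≠ e := by rintro rfl; exact he1.2 hbS
      have h3 : e ∈ link E d c := by rw [← link_comm]; exact he1.1
      have h4 : e ∈ link E c a := by rw [← link_comm]; exact he2.1
      exact h5 (shared hE habd (edge_perm hbcd b d c (Pq (by simp))) h3 h4 hbe)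
    have d35 : Disjoint (link E c d \ S) (link E b d \ S) := by
      rw [Finset.disjoint_left]; rintro e he1 he2
      rw [Finset.mem_sdiff] at he1 he2
      have hae : a ≠ e := by rintro rfl; exact he1.2 haS
      have h4 : e ∈ link E d b := by rw [← link_comm]; exact he2.1
      exact h5 (shared hE (edge_perm habc b a c (Pq (by simp))) hacd he1.1 h4 hae)
    have d45 : Disjoint (link E a c \ S) (link E b d \ S) := by
      rw [Finset.disjoint_left]; rintro e he1 he2
      rw [Finset.mem_sdiff] at he1 he2
      exact h5 (opp hE (edge_perm hacd c a d (Pq (by simp)))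
        (edge_perm habd a d b (Pq (by simp))) he1.1 he2.1 hbc.symm)
    -- counting
    have c2 : ((link E a b \ S) ∪ (link E b c \ S)).card =
        (link E a b \ S).card + (link E b c \ S).card :=
      Finset.card_union_of_disjoint d12
    have D3 : Disjoint ((link E a b \ S) ∪ (link E b c \ S)) (link E c d \ S) :=
      Finset.disjoint_union_left.mpr ⟨d13, d23⟩
    have c3 := Finset.card_union_of_disjoint D3
    have D4 : Disjoint ((link E a b \ S) ∪ (link E b c \ S) ∪ (link E c d \ S))
        (link E a c \ S) :=
      Finset.disjoint_union_left.mpr ⟨Finset.disjoint_union_left.mpr ⟨d14, d24⟩, d34⟩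
    have c4 := Finset.card_union_of_disjoint D4
    have D5 : Disjoint ((link E a b \ S) ∪ (link E b c \ S) ∪ (link E c d \ S) ∪ (link E a c \ S))
        (link E b d \ S) :=
      Finset.disjoint_union_left.mpr
        ⟨Finset.disjoint_union_left.mpr ⟨Finset.disjoint_union_left.mpr ⟨d15, d25⟩, d35⟩, d45⟩
    have c5 := Finset.card_union_of_disjoint D5
    have hsub : (link E a b \ S) ∪ (link E b c \ S) ∪ (link E c d \ S) ∪ (link E a c \ S)
        ∪ (link E b d \ S) ⊆ Finset.univ \ S := by
      intro t ht
      simp only [Finset.mem_union, Finset.mem_sdiff] at ht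
      rw [Finset.mem_sdiff]
      exact ⟨Finset.mem_univ t, by tauto⟩
    have hcard := Finset.card_le_card hsub
    have huniv : (Finset.univ \ S).card = n - 4 := by
      rw [Finset.card_sdiff_of_subset (Finset.subset_univ S), hScard, Finset.card_univ, Fintype.card_fin]
    omega
  · -- K4-free case
    have dAB : Disjoint (link E a b) (link E b c) := by
      rw [Finset.disjoint_left]; intro e h1 h2
      have hde : d ≠ e := by rintro rfl; exact hbcd (mem_link_iff.mp h2)
      exact h5 (shared hE (edge_perm hacd c d a (Pq (by simp)))
        (edge_perm habd d a b (Pq (by simp))) h1 h2 hde)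
    have dAC : Disjoint (link E a b) (link E c d) := by
      rw [Finset.disjoint_left]; intro e h1 h2
      exact h5 (opp hE (edge_perm habd b a d (Pq (by simp)))
        (edge_perm hacd a d c (Pq (by simp))) h1 h2 hbc)
    have hBC : link E b c ∩ link E c d ⊆ {a} := by
      intro e he
      rw [Finset.mem_inter] at he
      by_contra hea
      rw [Finset.mem_singleton] at hea
      exact h5 (shared hE (edge_perm habd d a b (Pq (by simp))) habc he.1 he.2
        (fun h => hea h.symm))
    have hb : b ∉ link E a b ∪ link E b c ∪ link E c d := by
      intro hbmem
      simp only [Finset.mem_union] at hbmem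
      rcases hbmem with (h | h) | h
      · exact (edge_ne hE (mem_link_iff.mp h)).2.2 rfl
      · exact (edge_ne hE (mem_link_iff.mp h)).2.1 rfl
      · exact hbcd (edge_perm (mem_link_iff.mp h) b c d (Pq (by simp)))
    have cAB : (link E a b ∪ link E b c).card = (link E a b).card + (link E b c).card :=
      Finset.card_union_of_disjoint dAB
    have hIC : ((link E a b ∪ link E b c) ∩ link E c d).card ≤ 1 := by
      have hsub : (link E a b ∪ link E b c) ∩ link E c d ⊆ {a} := by
        intro t ht
        rw [Finset.mem_inter, Finset.mem_union] at ht
        rcases ht.1 with h | h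
        · exact absurd ht.2 (Finset.disjoint_left.mp dAC h)
        · exact hBC (Finset.mem_inter.mpr ⟨h, ht.2⟩)
      exact le_trans (Finset.card_le_card hsub) (by simp)
    have hU := Finset.card_union_add_card_inter (link E a b ∪ link E b c) (link E c d)
    have hUb : (link E a b ∪ link E b c ∪ link E c d).card ≤ n - 1 := by
      have hsub : link E a b ∪ link E b c ∪ link E c d ⊆ Finset.univ.erase b := by
        intro t ht
        rw [Finset.mem_erase]
        exact ⟨fun h => hb (h ▸ ht), Finset.mem_univ t⟩
      have := Finset.card_le_card hsub
      rwa [Finset.card_erase_of_mem (Finset.mem_univ b), Finset.card_univ,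
        Fintype.card_fin] at this
    omega

end key

set_option maxHeartbeats 2000000 in
/-- for `n ≥ 6`, every non-empty `n`-vertex 3-graph with minimum positive
co-degree strictly greater than `n/3` contains a copy of `C5⁻`. -/
theorem stmt_1 (n : ℕ) (hn : 6 ≤ n) (E : Finset (Finset (Fin n)))
    (hE : isEdgeSet E) (hne : E.Nonempty)
    (hdeg : ∀ u v : Fin n, (link E u v).Nonempty → n < 3 * (link E u v).card) :
    hasC5minus E := by
  classical
  obtain ⟨e0, he0⟩ := hne
  obtain ⟨a, b, c, hab, hac, hbc, rfl⟩ := Finset.card_eq_three.mp (hE e0 he0)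
  have habc : ({a, b, c} : Finset (Fin n)) ∈ E := he0
  have hcA : c ∈ link E a b := mem_link_iff.mpr habc
  have hbB : b ∈ link E a c := mem_link_iff.mpr (edge_perm habc a c b (Pq (by simp)))
  have haC : a ∈ link E b c := mem_link_iff.mpr (edge_perm habc b c a (Pq (by simp)))
  by_cases h1 : (link E a b ∩ link E a c).Nonempty
  · obtain ⟨d, hd⟩ := h1
    rw [Finset.mem_inter] at hd
    exact key_lemma hn hE hdeg habc (mem_link_iff.mp hd.1) (mem_link_iff.mp hd.2)
  by_cases h2 : (link E a b ∩ link E b c).Nonempty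
  · obtain ⟨d, hd⟩ := h2
    rw [Finset.mem_inter] at hd
    have habd := mem_link_iff.mp hd.1
    have hbcd := mem_link_iff.mp hd.2
    exact key_lemma hn hE hdeg (edge_perm habc b a c (Pq (by simp)))
      (edge_perm habd b a d (Pq (by simp))) hbcd
  by_cases h3 : (link E a c ∩ link E b c).Nonempty
  · obtain ⟨d, hd⟩ := h3
    rw [Finset.mem_inter] at hd
    have hacd := mem_link_iff.mp hd.1
    have hbcd := mem_link_iff.mp hd.2
    exact key_lemma hn hE hdeg (edge_perm habc c a b (Pq (by simp)))
      (edge_perm hacd c a d (Pq (by simp))) (edge_perm hbcd c b d (Pq (by simp)))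
  exfalso
  rw [Finset.not_nonempty_iff_eq_empty] at h1 h2 h3
  have d1 : Disjoint (link E a b) (link E a c) := Finset.disjoint_iff_inter_eq_empty.mpr h1
  have d2 : Disjoint (link E a b) (link E b c) := Finset.disjoint_iff_inter_eq_empty.mpr h2
  have d3 : Disjoint (link E a c) (link E b c) := Finset.disjoint_iff_inter_eq_empty.mpr h3
  have hA := hdeg a b ⟨c, hcA⟩
  have hB := hdeg a c ⟨b, hbB⟩
  have hC := hdeg b c ⟨a, haC⟩
  have c1 : (link E a b ∪ link E a c).card = (link E a b).card + (link E a c).card :=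
    Finset.card_union_of_disjoint d1
  have D : Disjoint (link E a b ∪ link E a c) (link E b c) :=
    Finset.disjoint_union_left.mpr ⟨d2, d3⟩
  have c2 := Finset.card_union_of_disjoint D
  have hle : (link E a b ∪ link E a c ∪ link E b c).card ≤ n := by
    have h := Finset.card_le_card (Finset.subset_univ (link E a b ∪ link E a c ∪ link E b c))
    rwa [Finset.card_univ, Fintype.card_fin] at h
  omega
end

section
/- The complete balanced 4-partite 3-graph on n vertices contains no copy of C5 = {abc, bcd, cde, dea, eab} and has minimum positive co-degree equal to 2k when n ∈ {4k, 4k+1, 4k+2} and 2k+1 when n = 4k+3. -/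
open Finset

lemma fin4_compl : ∀ a b : Fin 4, a ≠ b →
    ∃ p q : Fin 4, p ≠ q ∧ p ≠ a ∧ p ≠ b ∧ q ≠ a ∧ q ≠ b := by decide

lemma fin4_cover : ∀ a b p q : Fin 4, a ≠ b → p ≠ q → p ≠ a → p ≠ b →
    q ≠ a → q ≠ b → ∀ x : Fin 4, x = a ∨ x = b ∨ x = p ∨ x = q := by decide

theorem stmt3_aux (n k : ℕ) (hn : 4 ≤ n) (f : Fin n → Fin 4)
    (hbal : ∀ i j : Fin 4,
      (Finset.univ.filter (fun v => f v = i)).card ≤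
        (Finset.univ.filter (fun v => f v = j)).card + 1)
    (E : Finset (Finset (Fin n)))
    (hE : ∀ e : Finset (Fin n), e ∈ E ↔ e.card = 3 ∧
      ∀ i : Fin 4, (e.filter (fun v => f v = i)).card ≤ 1) :
    ¬ hasC5 E ∧
    ((n = 4 * k ∨ n = 4 * k + 1 ∨ n = 4 * k + 2) →
      (∀ u v : Fin n, (link E u v).Nonempty → 2 * k ≤ (link E u v).card) ∧
      (∃ u v : Fin n, (link E u v).Nonempty ∧ (link E u v).card = 2 * k)) ∧
    (n = 4 * k + 3 →
      (∀ u v : Fin n, (link E u v).Nonempty → 2 * k + 1 ≤ (link E u v).card) ∧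
      (∃ u v : Fin n, (link E u v).Nonempty ∧ (link E u v).card = 2 * k + 1)) := by
  classical
  set C : Fin 4 → ℕ := fun i => (Finset.univ.filter (fun v => f v = i)).card with hC
  have hbal' : ∀ i j : Fin 4, C i ≤ C j + 1 := hbal
  -- vertices in an edge have pairwise distinct colors
  have key : ∀ e ∈ E, ∀ x ∈ e, ∀ y ∈ e, f x = f y → x = y := by
    intro e he x hx y hy hxy
    by_contra hne
    have h2 : 1 < (e.filter (fun v => f v = f x)).card := by
      rw [Finset.one_lt_card]
      exact ⟨x, Finset.mem_filter.mpr ⟨hx, rfl⟩, y, Finset.mem_filter.mpr ⟨hy, hxy.symm⟩, hne⟩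
    have := ((hE e).mp he).2 (f x)
    omega
  -- total count
  have hsum : ∑ i : Fin 4, C i = n := by
    have h := Finset.card_eq_sum_card_fiberwise (f := f) (s := Finset.univ) (t := Finset.univ)
      (fun x _ => Finset.mem_univ _)
    simpa [hC] using h.symm
  have hsum4 : ∀ a b p q : Fin 4, a ≠ b → p ≠ q → p ≠ a → p ≠ b → q ≠ a → q ≠ b →
      C a + C b + C p + C q = n := by
    intro a b p q h1 h2 h3 h4 h5 h6
    have huniv : ({a, b, p, q} : Finset (Fin 4)) = Finset.univ := by
      apply Finset.eq_univ_iff_forall.mpr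
      intro x
      simp only [Finset.mem_insert, Finset.mem_singleton]
      exact fin4_cover a b p q h1 h2 h3 h4 h5 h6 x
    have hs : ∑ i ∈ ({a, b, p, q} : Finset (Fin 4)), C i = n := by rw [huniv]; exact hsum
    rw [Finset.sum_insert (by simp [h1, (h3.symm : a ≠ p), (h5.symm : a ≠ q)]),
        Finset.sum_insert (by simp [(h4.symm : b ≠ p), (h6.symm : b ≠ q)]),
        Finset.sum_insert (by simp [h2]), Finset.sum_singleton] at hs
    omega
  -- link characterization
  have hlink : ∀ u v : Fin n, f u ≠ f v →
      link E u v = Finset.univ.filter (fun w => f w ≠ f u ∧ f w ≠ f v) := by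
    intro u v huv
    have huv' : u ≠ v := fun h => huv (by rw [h])
    ext w
    simp only [link, Finset.mem_filter, Finset.mem_univ, true_and]
    constructor
    · intro he
      have h3 := ((hE _).mp he).1
      constructor
      · intro hw
        have hwu : w = u := key _ he w (by simp) u (by simp) hw
        rw [hwu] at h3
        have hsub : ({u, v, u} : Finset (Fin n)) ⊆ {u, v} := by
          intro x hx; simp at hx ⊢; tauto
        have hle := Finset.card_le_card hsub
        have h2 : ({u, v} : Finset (Fin n)).card ≤ 2 :=
          (Finset.card_insert_le _ _).trans (by simp)
        omega
      · intro hw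
        have hwv : w = v := key _ he w (by simp) v (by simp) hw
        rw [hwv] at h3
        have hsub : ({u, v, v} : Finset (Fin n)) ⊆ {u, v} := by
          intro x hx; simp at hx ⊢; tauto
        have hle := Finset.card_le_card hsub
        have h2 : ({u, v} : Finset (Fin n)).card ≤ 2 :=
          (Finset.card_insert_le _ _).trans (by simp)
        omega
    · rintro ⟨hwu, hwv⟩
      have hwu' : w ≠ u := fun h => hwu (by rw [h])
      have hwv' : w ≠ v := fun h => hwv (by rw [h])
      refine (hE _).mpr ⟨?_, ?_⟩
      · rw [Finset.card_insert_of_notMem (by simp [huv', hwu'.symm]),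
            Finset.card_insert_of_notMem (by simp [hwv'.symm]), Finset.card_singleton]
      · intro i
        rw [Finset.card_le_one]
        intro x hx y hy
        simp only [Finset.mem_filter, Finset.mem_insert, Finset.mem_singleton] at hx hy
        obtain ⟨hx1, hx2⟩ := hx
        obtain ⟨hy1, hy2⟩ := hy
        have hxy : f x = f y := hx2.trans hy2.symm
        rcases hx1 with rfl | rfl | rfl <;> rcases hy1 with rfl | rfl | rfl <;>
          first
            | rfl
            | exact absurd hxy huv
            | exact absurd hxy hwu
            | exact absurd hxy hwv
            | exact absurd hxy (fun h => huv h.symm)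
            | exact absurd hxy (fun h => hwu h.symm)
            | exact absurd hxy (fun h => hwv h.symm)
  -- nonempty link forces distinct colors
  have hlinkne : ∀ u v : Fin n, (link E u v).Nonempty → f u ≠ f v := by
    rintro u v ⟨w, hw⟩ huv
    simp only [link, Finset.mem_filter, Finset.mem_univ, true_and] at hw
    have h3 := ((hE _).mp hw).1
    have huv' : u = v := key _ hw u (by simp) v (by simp) huv
    rw [huv'] at h3
    have hsub : ({v, v, w} : Finset (Fin n)) ⊆ {v, w} := by
      intro x hx; simp at hx ⊢; tauto
    have hle := Finset.card_le_card hsub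
    have h2 : ({v, w} : Finset (Fin n)).card ≤ 2 :=
      (Finset.card_insert_le _ _).trans (by simp)
    omega
  -- card of the complement filter
  have hsplit : ∀ a b p q : Fin 4, a ≠ b → p ≠ q → p ≠ a → p ≠ b → q ≠ a → q ≠ b →
      (Finset.univ.filter (fun w : Fin n => f w ≠ a ∧ f w ≠ b)).card = C p + C q := by
    intro a b p q h1 h2 h3 h4 h5 h6
    have hset : Finset.univ.filter (fun w : Fin n => f w ≠ a ∧ f w ≠ b) =
        Finset.univ.filter (fun w => f w = p) ∪ Finset.univ.filter (fun w => f w = q) := by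
      ext w
      simp only [Finset.mem_filter, Finset.mem_univ, true_and, Finset.mem_union]
      constructor
      · rintro ⟨ha, hb⟩
        rcases fin4_cover a b p q h1 h2 h3 h4 h5 h6 (f w) with h | h | h | h
        · exact absurd h ha
        · exact absurd h hb
        · exact Or.inl h
        · exact Or.inr h
      · rintro (h | h)
        · exact ⟨by rw [h]; exact h3, by rw [h]; exact h4⟩
        · exact ⟨by rw [h]; exact h5, by rw [h]; exact h6⟩
    have hdis : Disjoint (Finset.univ.filter (fun w : Fin n => f w = p))
        (Finset.univ.filter (fun w : Fin n => f w = q)) := by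
      rw [Finset.disjoint_left]
      intro w hw1 hw2
      simp only [Finset.mem_filter, Finset.mem_univ, true_and] at hw1 hw2
      exact h2 (hw1 ▸ hw2 ▸ rfl)
    rw [hset, Finset.card_union_of_disjoint hdis]
  -- a vertex in each nonempty part
  have hvert : ∀ a : Fin 4, 1 ≤ C a → ∃ u : Fin n, f u = a := by
    intro a ha
    have : (Finset.univ.filter (fun v : Fin n => f v = a)).Nonempty :=
      Finset.card_pos.mp ha
    obtain ⟨u, hu⟩ := this
    exact ⟨u, (Finset.mem_filter.mp hu).2⟩
  -- builder for exact-value witnesses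
  have build : ∀ a b p q : Fin 4, a ≠ b → p ≠ q → p ≠ a → p ≠ b → q ≠ a → q ≠ b →
      1 ≤ C a → 1 ≤ C b → 1 ≤ C p + C q →
      ∃ u v : Fin n, (link E u v).Nonempty ∧ (link E u v).card = C p + C q := by
    intro a b p q h1 h2 h3 h4 h5 h6 ha hb hpq
    obtain ⟨u, hu⟩ := hvert a ha
    obtain ⟨v, hv⟩ := hvert b hb
    have huv : f u ≠ f v := by rw [hu, hv]; exact h1
    have hcard : (link E u v).card = C p + C q := by
      rw [hlink u v huv, hu, hv, hsplit a b p q h1 h2 h3 h4 h5 h6]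
    exact ⟨u, v, Finset.card_pos.mp (by omega), hcard⟩
  -- generic lower bound on nonempty links
  have hlow : ∀ u v : Fin n, (link E u v).Nonempty →
      ∃ p q : Fin 4, p ≠ q ∧ C (f u) + C (f v) + C p + C q = n ∧
        (link E u v).card = C p + C q := by
    intro u v hne
    have huv := hlinkne u v hne
    obtain ⟨p, q, h2, h3, h4, h5, h6⟩ := fin4_compl (f u) (f v) huv
    refine ⟨p, q, h2, hsum4 (f u) (f v) p q huv h2 h3 h4 h5 h6, ?_⟩
    rw [hlink u v huv, hsplit (f u) (f v) p q huv h2 h3 h4 h5 h6]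
  refine ⟨?_, ?_, ?_⟩
  · -- C5-free
    rintro ⟨a, b, c, d, e, hab, hac, had, hae, hbc, hbd, hbe, hcd, hce, hde,
      e1, e2, e3, e4, e5⟩
    have fab : f a ≠ f b := fun h => hab (key _ e1 a (by simp) b (by simp) h)
    have fac : f a ≠ f c := fun h => hac (key _ e1 a (by simp) c (by simp) h)
    have fad : f a ≠ f d := fun h => had (key _ e4 a (by simp) d (by simp) h)
    have fae : f a ≠ f e := fun h => hae (key _ e4 a (by simp) e (by simp) h)
    have fbc : f b ≠ f c := fun h => hbc (key _ e1 b (by simp) c (by simp) h)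
    have fbd : f b ≠ f d := fun h => hbd (key _ e2 b (by simp) d (by simp) h)
    have fbe : f b ≠ f e := fun h => hbe (key _ e5 b (by simp) e (by simp) h)
    have fcd : f c ≠ f d := fun h => hcd (key _ e2 c (by simp) d (by simp) h)
    have fce : f c ≠ f e := fun h => hce (key _ e3 c (by simp) e (by simp) h)
    have fde : f d ≠ f e := fun h => hde (key _ e3 d (by simp) e (by simp) h)
    have h5 : ({f a, f b, f c, f d, f e} : Finset (Fin 4)).card = 5 := by
      rw [Finset.card_insert_of_notMem (by simp [fab, fac, fad, fae]),
          Finset.card_insert_of_notMem (by simp [fbc, fbd, fbe]),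
          Finset.card_insert_of_notMem (by simp [fcd, fce]),
          Finset.card_insert_of_notMem (by simp [fde]),
          Finset.card_singleton]
    have h4 := Finset.card_le_univ ({f a, f b, f c, f d, f e} : Finset (Fin 4))
    rw [h5, Fintype.card_fin] at h4
    omega
  · -- n = 4k, 4k+1, 4k+2
    intro hcase
    constructor
    · intro u v hne
      obtain ⟨p, q, hpq, hsn, hcard⟩ := hlow u v hne
      have h1 := hbal' p (f u); have h2 := hbal' q (f u)
      have h3 := hbal' (f u) p; have h4 := hbal' (f u) q
      have h5 := hbal' p (f v); have h6 := hbal' q (f v)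
      have h7 := hbal' (f v) p; have h8 := hbal' (f v) q
      have h9 := hbal' p q; have h10 := hbal' q p
      clear hE key hsum hsum4 hlink hlinkne hsplit hvert build hlow hbal hbal' hC
      omega
    · have hb01 := hbal' 0 1; have hb02 := hbal' 0 2; have hb03 := hbal' 0 3
      have hb10 := hbal' 1 0; have hb12 := hbal' 1 2; have hb13 := hbal' 1 3
      have hb20 := hbal' 2 0; have hb21 := hbal' 2 1; have hb23 := hbal' 2 3
      have hb30 := hbal' 3 0; have hb31 := hbal' 3 1; have hb32 := hbal' 3 2
      have hsumc : C 0 + C 1 + C 2 + C 3 = n := by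
        have := hsum; rw [Fin.sum_univ_four] at this; omega
      have hex : (C 0 + C 1 = 2 * k ∧ 1 ≤ C 2 ∧ 1 ≤ C 3) ∨
          (C 0 + C 2 = 2 * k ∧ 1 ≤ C 1 ∧ 1 ≤ C 3) ∨
          (C 0 + C 3 = 2 * k ∧ 1 ≤ C 1 ∧ 1 ≤ C 2) ∨
          (C 1 + C 2 = 2 * k ∧ 1 ≤ C 0 ∧ 1 ≤ C 3) ∨
          (C 1 + C 3 = 2 * k ∧ 1 ≤ C 0 ∧ 1 ≤ C 2) ∨
          (C 2 + C 3 = 2 * k ∧ 1 ≤ C 0 ∧ 1 ≤ C 1) := by omega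
      have hk : 1 ≤ k := by omega
      rcases hex with ⟨h1, h2, h3⟩ | ⟨h1, h2, h3⟩ | ⟨h1, h2, h3⟩ |
        ⟨h1, h2, h3⟩ | ⟨h1, h2, h3⟩ | ⟨h1, h2, h3⟩
      · obtain ⟨u, v, hne, hc⟩ := build 2 3 0 1 (by decide) (by decide) (by decide)
          (by decide) (by decide) (by decide) h2 h3 (by omega)
        exact ⟨u, v, hne, by omega⟩
      · obtain ⟨u, v, hne, hc⟩ := build 1 3 0 2 (by decide) (by decide) (by decide)
          (by decide) (by decide) (by decide) h2 h3 (by omega)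
        exact ⟨u, v, hne, by omega⟩
      · obtain ⟨u, v, hne, hc⟩ := build 1 2 0 3 (by decide) (by decide) (by decide)
          (by decide) (by decide) (by decide) h2 h3 (by omega)
        exact ⟨u, v, hne, by omega⟩
      · obtain ⟨u, v, hne, hc⟩ := build 0 3 1 2 (by decide) (by decide) (by decide)
          (by decide) (by decide) (by decide) h2 h3 (by omega)
        exact ⟨u, v, hne, by omega⟩
      · obtain ⟨u, v, hne, hc⟩ := build 0 2 1 3 (by decide) (by decide) (by decide)
          (by decide) (by decide) (by decide) h2 h3 (by omega)
        exact ⟨u, v, hne, by omega⟩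
      · obtain ⟨u, v, hne, hc⟩ := build 0 1 2 3 (by decide) (by decide) (by decide)
          (by decide) (by decide) (by decide) h2 h3 (by omega)
        exact ⟨u, v, hne, by omega⟩
  · -- n = 4k+3
    intro hcase
    constructor
    · intro u v hne
      obtain ⟨p, q, hpq, hsn, hcard⟩ := hlow u v hne
      have h1 := hbal' p (f u); have h2 := hbal' q (f u)
      have h3 := hbal' (f u) p; have h4 := hbal' (f u) q
      have h5 := hbal' p (f v); have h6 := hbal' q (f v)
      have h7 := hbal' (f v) p; have h8 := hbal' (f v) q
      have h9 := hbal' p q; have h10 := hbal' q p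
      clear hE key hsum hsum4 hlink hlinkne hsplit hvert build hlow hbal hbal' hC
      omega
    · have hb01 := hbal' 0 1; have hb02 := hbal' 0 2; have hb03 := hbal' 0 3
      have hb10 := hbal' 1 0; have hb12 := hbal' 1 2; have hb13 := hbal' 1 3
      have hb20 := hbal' 2 0; have hb21 := hbal' 2 1; have hb23 := hbal' 2 3
      have hb30 := hbal' 3 0; have hb31 := hbal' 3 1; have hb32 := hbal' 3 2
      have hsumc : C 0 + C 1 + C 2 + C 3 = n := by
        have := hsum; rw [Fin.sum_univ_four] at this; omega
      have hex : (C 0 + C 1 = 2 * k + 1 ∧ 1 ≤ C 2 ∧ 1 ≤ C 3) ∨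
          (C 0 + C 2 = 2 * k + 1 ∧ 1 ≤ C 1 ∧ 1 ≤ C 3) ∨
          (C 0 + C 3 = 2 * k + 1 ∧ 1 ≤ C 1 ∧ 1 ≤ C 2) ∨
          (C 1 + C 2 = 2 * k + 1 ∧ 1 ≤ C 0 ∧ 1 ≤ C 3) ∨
          (C 1 + C 3 = 2 * k + 1 ∧ 1 ≤ C 0 ∧ 1 ≤ C 2) ∨
          (C 2 + C 3 = 2 * k + 1 ∧ 1 ≤ C 0 ∧ 1 ≤ C 1) := by omega
      rcases hex with ⟨h1, h2, h3⟩ | ⟨h1, h2, h3⟩ | ⟨h1, h2, h3⟩ |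
        ⟨h1, h2, h3⟩ | ⟨h1, h2, h3⟩ | ⟨h1, h2, h3⟩
      · obtain ⟨u, v, hne, hc⟩ := build 2 3 0 1 (by decide) (by decide) (by decide)
          (by decide) (by decide) (by decide) h2 h3 (by omega)
        exact ⟨u, v, hne, by omega⟩
      · obtain ⟨u, v, hne, hc⟩ := build 1 3 0 2 (by decide) (by decide) (by decide)
          (by decide) (by decide) (by decide) h2 h3 (by omega)
        exact ⟨u, v, hne, by omega⟩
      · obtain ⟨u, v, hne, hc⟩ := build 1 2 0 3 (by decide) (by decide) (by decide)
          (by decide) (by decide) (by decide) h2 h3 (by omega)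
        exact ⟨u, v, hne, by omega⟩
      · obtain ⟨u, v, hne, hc⟩ := build 0 3 1 2 (by decide) (by decide) (by decide)
          (by decide) (by decide) (by decide) h2 h3 (by omega)
        exact ⟨u, v, hne, by omega⟩
      · obtain ⟨u, v, hne, hc⟩ := build 0 2 1 3 (by decide) (by decide) (by decide)
          (by decide) (by decide) (by decide) h2 h3 (by omega)
        exact ⟨u, v, hne, by omega⟩
      · obtain ⟨u, v, hne, hc⟩ := build 0 1 2 3 (by decide) (by decide) (by decide)
          (by decide) (by decide) (by decide) h2 h3 (by omega)
        exact ⟨u, v, hne, by omega⟩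

/-- the complete balanced 4-partite 3-graph on `n ≥ 4` vertices is `C5`-free
and has minimum positive co-degree `2k` when `n ∈ {4k, 4k+1, 4k+2}` and `2k+1` when `n = 4k+3`. -/
theorem stmt_3 (n k : ℕ) (hn : 4 ≤ n) (f : Fin n → Fin 4)
    (hbal : ∀ i j : Fin 4,
      (Finset.univ.filter (fun v => f v = i)).card ≤
        (Finset.univ.filter (fun v => f v = j)).card + 1) :
    let E := (Finset.univ : Finset (Finset (Fin n))).filter
      (fun e => e.card = 3 ∧ ∀ i : Fin 4, (e.filter (fun v => f v = i)).card ≤ 1)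
    ¬ hasC5 E ∧
    ((n = 4 * k ∨ n = 4 * k + 1 ∨ n = 4 * k + 2) →
      (∀ u v : Fin n, (link E u v).Nonempty → 2 * k ≤ (link E u v).card) ∧
      (∃ u v : Fin n, (link E u v).Nonempty ∧ (link E u v).card = 2 * k)) ∧
    (n = 4 * k + 3 →
      (∀ u v : Fin n, (link E u v).Nonempty → 2 * k + 1 ≤ (link E u v).card) ∧
      (∃ u v : Fin n, (link E u v).Nonempty ∧ (link E u v).card = 2 * k + 1)) := by
  intro E
  exact stmt3_aux n k hn f hbal E (fun e => by
    simp only [E, Finset.mem_filter, Finset.mem_univ, true_and])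
end

section
/- Let H be an n-vertex C5-free 3-graph containing a K4 on vertices v1,v2,v3,v4. If δ2^+(H) > n/2, then there is a contradiction; in particular, every n-vertex C5-free 3-graph (n ≥ 6) satisfies δ2^+(H) ≤ n/2. -/
open Finset

lemma mem_link {n : ℕ} {E : Finset (Finset (Fin n))} {u v t : Fin n} :
    t ∈ link E u v ↔ ({u, v, t} : Finset (Fin n)) ∈ E := by simp [link]

lemma edge_distinct {n : ℕ} {E : Finset (Finset (Fin n))} (hE : isEdgeSet E)
    {u v w : Fin n} (h : ({u, v, w} : Finset (Fin n)) ∈ E) :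
    u ≠ v ∧ u ≠ w ∧ v ≠ w := by
  have hc := hE _ h
  refine ⟨?_, ?_, ?_⟩ <;> rintro rfl
  · rw [show ({u,u,w} : Finset (Fin n)) = {u,w} from by ext i; simp only [Finset.mem_insert, Finset.mem_singleton]; tauto] at hc
    have := Finset.card_insert_le u ({w} : Finset (Fin n)); simp at this; omega
  · rw [show ({u,v,u} : Finset (Fin n)) = {u,v} from by ext i; simp only [Finset.mem_insert, Finset.mem_singleton]; tauto] at hc
    have := Finset.card_insert_le u ({v} : Finset (Fin n)); simp at this; omega
  · rw [show ({u,v,v} : Finset (Fin n)) = {u,v} from by ext i; simp only [Finset.mem_insert, Finset.mem_singleton]; tauto] at hc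
    have := Finset.card_insert_le u ({v} : Finset (Fin n)); simp at this; omega

lemma sum_links {n : ℕ} (L1 L2 L3 L4 L5 L6 : Finset (Fin n))
    (h1 : n < 2 * L1.card) (h2 : n < 2 * L2.card) (h3 : n < 2 * L3.card)
    (h4 : n < 2 * L4.card) (h5 : n < 2 * L5.card) (h6 : n < 2 * L6.card) :
    ∃ t : Fin n, 4 ≤ (if t ∈ L1 then 1 else 0) + (if t ∈ L2 then 1 else 0) +
      (if t ∈ L3 then 1 else 0) + (if t ∈ L4 then 1 else 0) +
      (if t ∈ L5 then 1 else 0) + (if t ∈ L6 then 1 else 0) := by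
  by_contra hc
  push_neg at hc
  have key : ∀ L : Finset (Fin n), (∑ t : Fin n, if t ∈ L then 1 else 0) = L.card := by
    intro L; simp [Finset.sum_ite_mem]
  have hsum : (∑ t : Fin n, ((if t ∈ L1 then 1 else 0) + (if t ∈ L2 then 1 else 0) +
      (if t ∈ L3 then 1 else 0) + (if t ∈ L4 then 1 else 0) +
      (if t ∈ L5 then 1 else 0) + (if t ∈ L6 then 1 else 0)))
      = L1.card + L2.card + L3.card + L4.card + L5.card + L6.card := by
    simp only [Finset.sum_add_distrib, key]
  have hb : (∑ t : Fin n, ((if t ∈ L1 then 1 else 0) + (if t ∈ L2 then 1 else 0) +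
      (if t ∈ L3 then 1 else 0) + (if t ∈ L4 then 1 else 0) +
      (if t ∈ L5 then 1 else 0) + (if t ∈ L6 then 1 else 0)))
      ≤ ∑ _t : Fin n, 3 :=
    Finset.sum_le_sum (fun t _ => by have := hc t; omega)
  simp only [Finset.sum_const, Finset.card_univ, Fintype.card_fin, smul_eq_mul] at hb
  omega

set_option maxHeartbeats 1000000 in
lemma pick4 (P1 P2 P3 P4 P5 P6 : Prop) [Decidable P1] [Decidable P2] [Decidable P3]
    [Decidable P4] [Decidable P5] [Decidable P6]
    (h : 4 ≤ (if P1 then 1 else 0) + (if P2 then 1 else 0) + (if P3 then 1 else 0) +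
      (if P4 then 1 else 0) + (if P5 then 1 else 0) + (if P6 then 1 else 0)) :
    (P1∧P2∧P3∧P4)∨(P1∧P2∧P3∧P5)∨(P1∧P2∧P3∧P6)∨(P1∧P2∧P4∧P5)∨(P1∧P2∧P4∧P6)∨
    (P1∧P2∧P5∧P6)∨(P1∧P3∧P4∧P5)∨(P1∧P3∧P4∧P6)∨(P1∧P3∧P5∧P6)∨(P1∧P4∧P5∧P6)∨
    (P2∧P3∧P4∧P5)∨(P2∧P3∧P4∧P6)∨(P2∧P3∧P5∧P6)∨(P2∧P4∧P5∧P6)∨(P3∧P4∧P5∧P6) := by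
  by_cases h1 : P1 <;> by_cases h2 : P2 <;> by_cases h3 : P3 <;> by_cases h4 : P4 <;>
    by_cases h5 : P5 <;> by_cases h6 : P6 <;> simp_all

lemma path_lemma {n : ℕ} {E : Finset (Finset (Fin n))} (hE : isEdgeSet E)
    (hC5 : ¬ hasC5 E) {p q r s t : Fin n}
    (hpq : p ≠ q) (hpr : p ≠ r) (hps : p ≠ s) (hqr : q ≠ r) (hqs : q ≠ s) (hrs : r ≠ s)
    (h1 : ({p,q,r} : Finset (Fin n)) ∈ E) (h2 : ({q,r,s} : Finset (Fin n)) ∈ E)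
    (h3 : ({p,q,t} : Finset (Fin n)) ∈ E) (h4 : ({p,s,t} : Finset (Fin n)) ∈ E)
    (h5 : ({r,s,t} : Finset (Fin n)) ∈ E) : False := by
  obtain ⟨-, htp, htq⟩ := edge_distinct hE h3
  obtain ⟨-, htr, hts⟩ := edge_distinct hE h5
  exact hC5 ⟨q, p, t, s, r,
    hpq.symm, htq, hqs, hqr, htp, hps, hpr,
    hts.symm, htr.symm, hrs.symm,
    (show ({p,q,t} : Finset (Fin n)) = {q,p,t} from by ext i; simp only [Finset.mem_insert, Finset.mem_singleton]; tauto) ▸ h3,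
    (show ({p,s,t} : Finset (Fin n)) = {p,t,s} from by ext i; simp only [Finset.mem_insert, Finset.mem_singleton]; tauto) ▸ h4,
    (show ({r,s,t} : Finset (Fin n)) = {t,s,r} from by ext i; simp only [Finset.mem_insert, Finset.mem_singleton]; tauto) ▸ h5,
    (show ({q,r,s} : Finset (Fin n)) = {s,r,q} from by ext i; simp only [Finset.mem_insert, Finset.mem_singleton]; tauto) ▸ h2,
    (show ({p,q,r} : Finset (Fin n)) = {r,q,p} from by ext i; simp only [Finset.mem_insert, Finset.mem_singleton]; tauto) ▸ h1⟩

lemma k4_lemma {n : ℕ} {E : Finset (Finset (Fin n))} (hE : isEdgeSet E)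
    {p q r t : Fin n} (hpq : p ≠ q) (hpr : p ≠ r) (hqr : q ≠ r)
    (h1 : ({p,q,r} : Finset (Fin n)) ∈ E) (h3 : ({p,q,t} : Finset (Fin n)) ∈ E)
    (h4 : ({p,r,t} : Finset (Fin n)) ∈ E) (h5 : ({q,r,t} : Finset (Fin n)) ∈ E) :
    isK4 E p q r t := by
  obtain ⟨-, hpt, hqt⟩ := edge_distinct hE h3
  obtain ⟨-, -, hrt⟩ := edge_distinct hE h4
  exact ⟨hpq, hpr, hpt, hqr, hqt, hrt, h1, h3, h4, h5⟩

lemma perm213 {α : Type*} [DecidableEq α] (a b c : α) : ({a,b,c} : Finset α) = {b,a,c} := by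
  ext i; simp only [Finset.mem_insert, Finset.mem_singleton]; tauto

lemma perm132 {α : Type*} [DecidableEq α] (a b c : α) : ({a,b,c} : Finset α) = {a,c,b} := by
  ext i; simp only [Finset.mem_insert, Finset.mem_singleton]; tauto

lemma perm231 {α : Type*} [DecidableEq α] (a b c : α) : ({a,b,c} : Finset α) = {b,c,a} := by
  ext i; simp only [Finset.mem_insert, Finset.mem_singleton]; tauto

lemma perm312 {α : Type*} [DecidableEq α] (a b c : α) : ({a,b,c} : Finset α) = {c,a,b} := by
  ext i; simp only [Finset.mem_insert, Finset.mem_singleton]; tauto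

lemma perm321 {α : Type*} [DecidableEq α] (a b c : α) : ({a,b,c} : Finset α) = {c,b,a} := by
  ext i; simp only [Finset.mem_insert, Finset.mem_singleton]; tauto

set_option maxHeartbeats 1000000 in
lemma main1 {n : ℕ} {E : Finset (Finset (Fin n))} (hE : isEdgeSet E)
    (hC5 : ¬ hasC5 E) (a b c d : Fin n) (hK4 : isK4 E a b c d)
    (hno : ∀ u v : Fin n, (link E u v).Nonempty → n < 2 * (link E u v).card) : False := by
  obtain ⟨hab, hac, had, hbc, hbd, hcd, e1, e2, e3, e4⟩ := hK4
  have N1 : n < 2 * (link E a b).card := hno a b ⟨c, mem_link.2 e1⟩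
  have N2 : n < 2 * (link E a c).card := hno a c ⟨b, mem_link.2 ((perm132 a b c : ({a,b,c} : Finset (Fin n)) = _) ▸ e1)⟩
  have N3 : n < 2 * (link E a d).card := hno a d ⟨b, mem_link.2 ((perm132 a b d : ({a,b,d} : Finset (Fin n)) = _) ▸ e2)⟩
  have N4 : n < 2 * (link E b c).card := hno b c ⟨a, mem_link.2 ((perm231 a b c : ({a,b,c} : Finset (Fin n)) = _) ▸ e1)⟩
  have N5 : n < 2 * (link E b d).card := hno b d ⟨a, mem_link.2 ((perm231 a b d : ({a,b,d} : Finset (Fin n)) = _) ▸ e2)⟩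
  have N6 : n < 2 * (link E c d).card := hno c d ⟨a, mem_link.2 ((perm231 a c d : ({a,c,d} : Finset (Fin n)) = _) ▸ e3)⟩
  obtain ⟨t, ht⟩ := sum_links (link E a b) (link E a c) (link E a d) (link E b c)
    (link E b d) (link E c d) N1 N2 N3 N4 N5 N6
  rcases pick4 _ _ _ _ _ _ ht with ⟨hm0,hm1,hm2,hm3⟩|⟨hm0,hm1,hm2,hm3⟩|⟨hm0,hm1,hm2,hm3⟩|⟨hm0,hm1,hm2,hm3⟩|⟨hm0,hm1,hm2,hm3⟩|⟨hm0,hm1,hm2,hm3⟩|⟨hm0,hm1,hm2,hm3⟩|⟨hm0,hm1,hm2,hm3⟩|⟨hm0,hm1,hm2,hm3⟩|⟨hm0,hm1,hm2,hm3⟩|⟨hm0,hm1,hm2,hm3⟩|⟨hm0,hm1,hm2,hm3⟩|⟨hm0,hm1,hm2,hm3⟩|⟨hm0,hm1,hm2,hm3⟩|⟨hm0,hm1,hm2,hm3⟩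
  · exact path_lemma hE hC5 had hab hac hbd.symm hcd.symm hbc ((perm132 a b d : ({a,b,d} : Finset (Fin n)) = _) ▸ e2) ((perm312 b c d : ({b,c,d} : Finset (Fin n)) = _) ▸ e4) (mem_link.1 hm2) (mem_link.1 hm1) (mem_link.1 hm3)
  · exact path_lemma hE hC5 hac hab had hbc.symm hcd hbd ((perm132 a b c : ({a,b,c} : Finset (Fin n)) = _) ▸ e1) ((perm213 b c d : ({b,c,d} : Finset (Fin n)) = _) ▸ e4) (mem_link.1 hm1) (mem_link.1 hm2) (mem_link.1 hm3)
  · exact path_lemma hE hC5 hab hac had hbc hbd hcd e1 e4 (mem_link.1 hm0) (mem_link.1 hm2) (mem_link.1 hm3)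
  · exact path_lemma hE hC5 hac had hab hcd hbc.symm hbd.symm e3 ((perm231 b c d : ({b,c,d} : Finset (Fin n)) = _) ▸ e4) (mem_link.1 hm1) (mem_link.1 hm0) ((perm213 b d t : ({b,d,t} : Finset (Fin n)) = _) ▸ (mem_link.1 hm3))
  · exact path_lemma hE hC5 hab had hac hbd hbc hcd.symm e2 ((perm132 b c d : ({b,c,d} : Finset (Fin n)) = _) ▸ e4) (mem_link.1 hm0) (mem_link.1 hm1) ((perm213 c d t : ({c,d,t} : Finset (Fin n)) = _) ▸ (mem_link.1 hm3))
  · exact path_lemma hE hC5 hab had hac hbd hbc hcd.symm e2 ((perm132 b c d : ({b,c,d} : Finset (Fin n)) = _) ▸ e4) (mem_link.1 hm0) (mem_link.1 hm1) ((perm213 c d t : ({c,d,t} : Finset (Fin n)) = _) ▸ (mem_link.1 hm3))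
  · exact path_lemma hE hC5 had hac hab hcd.symm hbd.symm hbc.symm ((perm132 a c d : ({a,c,d} : Finset (Fin n)) = _) ▸ e3) ((perm321 b c d : ({b,c,d} : Finset (Fin n)) = _) ▸ e4) (mem_link.1 hm1) (mem_link.1 hm0) ((perm213 b c t : ({b,c,t} : Finset (Fin n)) = _) ▸ (mem_link.1 hm2))
  · exact path_lemma hE hC5 hab hac had hbc hbd hcd e1 e4 (mem_link.1 hm0) (mem_link.1 hm1) (mem_link.1 hm3)
  · exact path_lemma hE hC5 hab hac had hbc hbd hcd e1 e4 (mem_link.1 hm0) (mem_link.1 hm1) (mem_link.1 hm3)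
  · exact path_lemma hE hC5 hab.symm hbc hbd hac had hcd ((perm213 a b c : ({a,b,c} : Finset (Fin n)) = _) ▸ e1) e3 ((perm213 a b t : ({a,b,t} : Finset (Fin n)) = _) ▸ (mem_link.1 hm0)) (mem_link.1 hm2) (mem_link.1 hm3)
  · exact path_lemma hE hC5 hac hab had hbc.symm hcd hbd ((perm132 a b c : ({a,b,c} : Finset (Fin n)) = _) ▸ e1) ((perm213 b c d : ({b,c,d} : Finset (Fin n)) = _) ▸ e4) (mem_link.1 hm0) (mem_link.1 hm1) (mem_link.1 hm3)
  · exact path_lemma hE hC5 had hab hac hbd.symm hcd.symm hbc ((perm132 a b d : ({a,b,d} : Finset (Fin n)) = _) ▸ e2) ((perm312 b c d : ({b,c,d} : Finset (Fin n)) = _) ▸ e4) (mem_link.1 hm1) (mem_link.1 hm0) (mem_link.1 hm2)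
  · exact path_lemma hE hC5 hac hab had hbc.symm hcd hbd ((perm132 a b c : ({a,b,c} : Finset (Fin n)) = _) ▸ e1) ((perm213 b c d : ({b,c,d} : Finset (Fin n)) = _) ▸ e4) (mem_link.1 hm0) (mem_link.1 hm1) (mem_link.1 hm2)
  · exact path_lemma hE hC5 hbd hab.symm hbc had.symm hcd.symm hac ((perm231 a b d : ({a,b,d} : Finset (Fin n)) = _) ▸ e2) ((perm312 a c d : ({a,c,d} : Finset (Fin n)) = _) ▸ e3) (mem_link.1 hm2) (mem_link.1 hm1) (mem_link.1 hm0)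
  · exact path_lemma hE hC5 hbc hab.symm hbd hac.symm hcd had ((perm231 a b c : ({a,b,c} : Finset (Fin n)) = _) ▸ e1) ((perm213 a c d : ({a,c,d} : Finset (Fin n)) = _) ▸ e3) (mem_link.1 hm1) (mem_link.1 hm2) (mem_link.1 hm0)

set_option maxHeartbeats 1000000 in
/-- a `C5`-free 3-graph containing a `K4` cannot have minimum positive
co-degree `> n/2`; in particular every non-empty `C5`-free 3-graph on `n ≥ 6` vertices
has some positive co-degree at most `n/2`. -/
theorem stmt_5 (n : ℕ) (E : Finset (Finset (Fin n))) (hE : isEdgeSet E)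
    (hC5free : ¬ hasC5 E) :
    (∀ v1 v2 v3 v4 : Fin n, isK4 E v1 v2 v3 v4 →
      ¬ (∀ u v : Fin n, (link E u v).Nonempty → n < 2 * (link E u v).card)) ∧
    (6 ≤ n → E.Nonempty →
      ∃ u v : Fin n, (link E u v).Nonempty ∧ 2 * (link E u v).card ≤ n) := by
  constructor
  · intro v1 v2 v3 v4 hK4 hbig
    exact main1 hE hC5free v1 v2 v3 v4 hK4 hbig
  ·
    intro _h6 hEne
    by_contra hcon
    push_neg at hcon
    have hno : ∀ u v : Fin n, (link E u v).Nonempty → n < 2 * (link E u v).card := hcon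
    obtain ⟨e, hee⟩ := hEne
    obtain ⟨x, y, z, nxy, nxz, nyz, rfl⟩ := Finset.card_eq_three.1 (hE e hee)
    have he : ({x, y, z} : Finset (Fin n)) ∈ E := hee
    have hxy : n < 2 * (link E x y).card := hno x y ⟨z, mem_link.2 he⟩
    have hyz : n < 2 * (link E y z).card := hno y z ⟨x,
      mem_link.2 (((perm231 x y z : ({x,y,z} : Finset (Fin n)) = _) ▸ he))⟩
    have hint : ((link E x y) ∩ (link E y z)).Nonempty := by
      rw [← Finset.card_pos]
      have h1 := Finset.card_inter_add_card_union (link E x y) (link E y z)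
      have h2 : ((link E x y) ∪ (link E y z)).card ≤ n := by
        have := Finset.card_le_univ ((link E x y) ∪ (link E y z))
        simpa using this
      omega
    obtain ⟨w, hw⟩ := hint
    obtain ⟨hw1, hw2⟩ := Finset.mem_inter.1 hw
    have he2 : ({x, y, w} : Finset (Fin n)) ∈ E := mem_link.1 hw1
    have he3 : ({y, z, w} : Finset (Fin n)) ∈ E := mem_link.1 hw2
    obtain ⟨-, nxw, nyw⟩ := edge_distinct hE he2
    obtain ⟨-, -, nzw⟩ := edge_distinct hE he3
    have hC5 := hC5free
    have N1 : n < 2 * (link E x y).card := hno x y ⟨z, mem_link.2 he⟩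
    have N2 : n < 2 * (link E x z).card := hno x z ⟨y, mem_link.2 ((perm132 x y z : ({x,y,z} : Finset (Fin n)) = _) ▸ he)⟩
    have N3 : n < 2 * (link E x w).card := hno x w ⟨y, mem_link.2 ((perm132 x y w : ({x,y,w} : Finset (Fin n)) = _) ▸ he2)⟩
    have N4 : n < 2 * (link E y z).card := hno y z ⟨x, mem_link.2 ((perm231 x y z : ({x,y,z} : Finset (Fin n)) = _) ▸ he)⟩
    have N5 : n < 2 * (link E y w).card := hno y w ⟨x, mem_link.2 ((perm231 x y w : ({x,y,w} : Finset (Fin n)) = _) ▸ he2)⟩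
    have N6 : n < 2 * (link E z w).card := hno z w ⟨y, mem_link.2 ((perm231 y z w : ({y,z,w} : Finset (Fin n)) = _) ▸ he3)⟩
    obtain ⟨t, ht⟩ := sum_links (link E x y) (link E x z) (link E x w) (link E y z)
      (link E y w) (link E z w) N1 N2 N3 N4 N5 N6
    rcases pick4 _ _ _ _ _ _ ht with ⟨hm0,hm1,hm2,hm3⟩|⟨hm0,hm1,hm2,hm3⟩|⟨hm0,hm1,hm2,hm3⟩|⟨hm0,hm1,hm2,hm3⟩|⟨hm0,hm1,hm2,hm3⟩|⟨hm0,hm1,hm2,hm3⟩|⟨hm0,hm1,hm2,hm3⟩|⟨hm0,hm1,hm2,hm3⟩|⟨hm0,hm1,hm2,hm3⟩|⟨hm0,hm1,hm2,hm3⟩|⟨hm0,hm1,hm2,hm3⟩|⟨hm0,hm1,hm2,hm3⟩|⟨hm0,hm1,hm2,hm3⟩|⟨hm0,hm1,hm2,hm3⟩|⟨hm0,hm1,hm2,hm3⟩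
    · exact path_lemma hE hC5 nxw nxy nxz nyw.symm nzw.symm nyz ((perm132 x y w : ({x,y,w} : Finset (Fin n)) = _) ▸ he2) ((perm312 y z w : ({y,z,w} : Finset (Fin n)) = _) ▸ he3) (mem_link.1 hm2) (mem_link.1 hm1) (mem_link.1 hm3)
    · exact path_lemma hE hC5 nxz nxy nxw nyz.symm nzw nyw ((perm132 x y z : ({x,y,z} : Finset (Fin n)) = _) ▸ he) ((perm213 y z w : ({y,z,w} : Finset (Fin n)) = _) ▸ he3) (mem_link.1 hm1) (mem_link.1 hm2) (mem_link.1 hm3)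
    · exact path_lemma hE hC5 nxy nxz nxw nyz nyw nzw he he3 (mem_link.1 hm0) (mem_link.1 hm2) (mem_link.1 hm3)
    · exact main1 hE hC5 _ _ _ _ (k4_lemma hE nxy nxz nyz he (mem_link.1 hm0) (mem_link.1 hm1) (mem_link.1 hm2)) hno
    · exact path_lemma hE hC5 nxy nxw nxz nyw nyz nzw.symm he2 ((perm132 y z w : ({y,z,w} : Finset (Fin n)) = _) ▸ he3) (mem_link.1 hm0) (mem_link.1 hm1) ((perm213 z w t : ({z,w,t} : Finset (Fin n)) = _) ▸ (mem_link.1 hm3))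
    · exact path_lemma hE hC5 nxy nxw nxz nyw nyz nzw.symm he2 ((perm132 y z w : ({y,z,w} : Finset (Fin n)) = _) ▸ he3) (mem_link.1 hm0) (mem_link.1 hm1) ((perm213 z w t : ({z,w,t} : Finset (Fin n)) = _) ▸ (mem_link.1 hm3))
    · exact main1 hE hC5 _ _ _ _ (k4_lemma hE nxy nxw nyw he2 (mem_link.1 hm0) (mem_link.1 hm1) (mem_link.1 hm3)) hno
    · exact path_lemma hE hC5 nxy nxz nxw nyz nyw nzw he he3 (mem_link.1 hm0) (mem_link.1 hm1) (mem_link.1 hm3)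
    · exact path_lemma hE hC5 nxy nxz nxw nyz nyw nzw he he3 (mem_link.1 hm0) (mem_link.1 hm1) (mem_link.1 hm3)
    · exact main1 hE hC5 _ _ _ _ (k4_lemma hE nyz nyw nzw he3 (mem_link.1 hm1) (mem_link.1 hm2) (mem_link.1 hm3)) hno
    · exact path_lemma hE hC5 nxz nxy nxw nyz.symm nzw nyw ((perm132 x y z : ({x,y,z} : Finset (Fin n)) = _) ▸ he) ((perm213 y z w : ({y,z,w} : Finset (Fin n)) = _) ▸ he3) (mem_link.1 hm0) (mem_link.1 hm1) (mem_link.1 hm3)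
    · exact path_lemma hE hC5 nxw nxy nxz nyw.symm nzw.symm nyz ((perm132 x y w : ({x,y,w} : Finset (Fin n)) = _) ▸ he2) ((perm312 y z w : ({y,z,w} : Finset (Fin n)) = _) ▸ he3) (mem_link.1 hm1) (mem_link.1 hm0) (mem_link.1 hm2)
    · exact path_lemma hE hC5 nxz nxy nxw nyz.symm nzw nyw ((perm132 x y z : ({x,y,z} : Finset (Fin n)) = _) ▸ he) ((perm213 y z w : ({y,z,w} : Finset (Fin n)) = _) ▸ he3) (mem_link.1 hm0) (mem_link.1 hm1) (mem_link.1 hm2)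
    · exact path_lemma hE hC5 nxz.symm nyz.symm nzw nxy nxw nyw ((perm312 x y z : ({x,y,z} : Finset (Fin n)) = _) ▸ he) he2 ((perm213 x z t : ({x,z,t} : Finset (Fin n)) = _) ▸ (mem_link.1 hm0)) (mem_link.1 hm3) (mem_link.1 hm2)
    · exact path_lemma hE hC5 nyz.symm nxz.symm nzw nxy.symm nyw nxw ((perm321 x y z : ({x,y,z} : Finset (Fin n)) = _) ▸ he) ((perm213 x y w : ({x,y,w} : Finset (Fin n)) = _) ▸ he2) ((perm213 y z t : ({y,z,t} : Finset (Fin n)) = _) ▸ (mem_link.1 hm1)) (mem_link.1 hm3) (mem_link.1 hm0)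
end
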